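/- Let G be a digraph and let x ∈ V(G) be a vertex such that χ⃗(G − x) < χ⃗(G). Then for every χ⃗(G − x)-dicolouring φ of G − x and every colour c in the image of φ, there exists a directed walk in G − x all of whose vertices have colour c, starting at an out-neighbour of x and ending at an in-neighbour of x (possibly a single-vertex walk). In particular, min(d^+(x), d^−(x)) ≥ χ⃗(G) − 1. -/

import Mathlib

/-! Colour `x` with `c` in an optimal dicolouring of `G - x`. As `G` needs more colours, some
colour class now contains a dicycle; since `G - x` had none, it passes through `x`, so it has
colour `c`, and deleting `x` from it leaves the walk. The walks of distinct colours start at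
distinct out-neighbours and end at distinct in-neighbours of `x`, and `χ⃗(G) ≤ χ⃗(G - x) + 1`. -/

/-- A (simple) digraph: a finite vertex set (of naturals) together with a finite
set of arcs between distinct vertices. -/
structure FDigraph where
  verts : Finset ℕ
  arcs : Finset (ℕ × ℕ)
  wf : ∀ a ∈ arcs, a.1 ∈ verts ∧ a.2 ∈ verts ∧ a.1 ≠ a.2

namespace FDigraph

/-- Smart constructor: keeps only the legal arcs. -/
def mk' (V : Finset ℕ) (A : Finset (ℕ × ℕ)) : FDigraph where
  verts := V
  arcs := A.filter fun a => a.1 ∈ V ∧ a.2 ∈ V ∧ a.1 ≠ a.2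
  wf := by
    intro a ha
    simp only [Finset.mem_filter] at ha
    exact ha.2

/-- A directed cycle, given as its (nonempty, duplicate-free) list of vertices:
every cyclically consecutive pair is an arc. -/
def IsDicycle (G : FDigraph) (l : List ℕ) : Prop :=
  l ≠ [] ∧ l.Nodup ∧ ∀ p ∈ l.zip (l.rotate 1), p ∈ G.arcs

/-- A set of vertices is acyclic if it contains no directed cycle. -/
def AcyclicOn (G : FDigraph) (S : Set ℕ) : Prop :=
  ¬ ∃ l, G.IsDicycle l ∧ ∀ v ∈ l, v ∈ S

/-- A `k`-dicolouring: colours `0, …, k-1`, every colour class acyclic. -/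
def IsDicolouring (G : FDigraph) (k : ℕ) (φ : ℕ → ℕ) : Prop :=
  (∀ v ∈ G.verts, φ v < k) ∧ ∀ c, G.AcyclicOn {v | φ v = c}

/-- The dichromatic number. -/
noncomputable def dichi (G : FDigraph) : ℕ := sInf {k | ∃ φ, G.IsDicolouring k φ}

/-- Subdigraph relation. -/
def Subdigraph (H G : FDigraph) : Prop := H.verts ⊆ G.verts ∧ H.arcs ⊆ G.arcs

/-- `G` is `k`-dicritical. -/
def Dicritical (G : FDigraph) (k : ℕ) : Prop :=
  G.dichi = k ∧ ∀ H, Subdigraph H G → H ≠ G → H.dichi ≤ k - 1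

/-- Induced subdigraph on a finite set of vertices. -/
def induce (G : FDigraph) (S : Finset ℕ) : FDigraph := mk' (G.verts ∩ S) G.arcs

def outDeg (G : FDigraph) (v : ℕ) : ℕ := (G.arcs.filter fun a => a.1 = v).card
def inDeg (G : FDigraph) (v : ℕ) : ℕ := (G.arcs.filter fun a => a.2 = v).card
def deg (G : FDigraph) (v : ℕ) : ℕ := G.outDeg v + G.inDeg v

/-- Weak adjacency: an arc in either direction. -/
def wadj (G : FDigraph) (u v : ℕ) : Prop := (u, v) ∈ G.arcs ∨ (v, u) ∈ G.arcs

/-- Weak reachability. -/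
def WReach (G : FDigraph) : ℕ → ℕ → Prop := Relation.ReflTransGen G.wadj

/-- A digraph is connected when its underlying graph is connected
(the empty digraph counts as connected). -/
def Connected (G : FDigraph) : Prop := ∀ u ∈ G.verts, ∀ v ∈ G.verts, G.WReach u v

/-- The set of connected components. -/
def components (G : FDigraph) : Set (Set ℕ) :=
  {C | ∃ v ∈ G.verts, C = {u | u ∈ G.verts ∧ G.WReach v u}}

/-- The number of connected components. -/
noncomputable def numComponents (G : FDigraph) : ℕ := G.components.ncard

/-- Isomorphism of digraphs. -/
def Iso (G H : FDigraph) : Prop :=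
  ∃ f : ℕ → ℕ, Set.BijOn f ↑G.verts ↑H.verts ∧
    ∀ u ∈ G.verts, ∀ v ∈ G.verts, ((u, v) ∈ G.arcs ↔ (f u, f v) ∈ H.arcs)

/-- The bidirected (complete) digraph `↔K_n`. -/
def completeD (n : ℕ) : FDigraph := mk' (Finset.range n) (Finset.range n ×ˢ Finset.range n)

/-- The directed cycle `C⃗_n`. -/
def dirCycle (n : ℕ) : FDigraph :=
  mk' (Finset.range n)
    ((Finset.range n ×ˢ Finset.range n).filter fun a => a.2 = (a.1 + 1) % n)

/-- The bidirected cycle `↔C_n`. -/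
def biCycle (n : ℕ) : FDigraph :=
  mk' (Finset.range n)
    ((Finset.range n ×ˢ Finset.range n).filter fun a =>
      a.2 = (a.1 + 1) % n ∨ a.1 = (a.2 + 1) % n)

/-- The Dirac join of `↔K_{k-2}` (on `{0,…,k-3}`) and the directed triangle
`C⃗_3` (on `{k-2, k-1, k}`). -/
def diracJoinExample (k : ℕ) : FDigraph :=
  mk' (Finset.range (k + 1))
    ((Finset.range (k + 1) ×ˢ Finset.range (k + 1)).filter fun a =>
      a.1 < k - 2 ∨ a.2 < k - 2 ∨ a.2 = (if a.1 = k then k - 2 else a.1 + 1))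

end FDigraph

namespace FDigraph

section Dicycles

variable {G : FDigraph} {l : List ℕ}

lemma isDicycle_cons_iff {a : ℕ} {t : List ℕ} :
    G.IsDicycle (a :: t) ↔
      (a :: t).Nodup ∧ (a :: t ++ [a]).IsChain (fun u v => (u, v) ∈ G.arcs) := by
  rw [IsDicycle, List.isChain_cons_append_singleton_iff_forall₂, List.forall₂_iff_zip]
  simp [Prod.forall]

lemma IsDicycle.rotate (hc : G.IsDicycle l) (n : ℕ) : G.IsDicycle (l.rotate n) := by
  obtain ⟨hne, hnd, harcs⟩ := hc
  refine ⟨by simpa [List.rotate_eq_nil_iff] using hne, List.nodup_rotate.mpr hnd,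
    fun p hp => harcs p ?_⟩
  rw [List.rotate_rotate, add_comm, ← List.rotate_rotate, List.zip,
    ← List.zipWith_rotate_distrib _ _ _ _ (List.length_rotate ..).symm] at hp
  exact List.mem_rotate.mp hp

lemma IsDicycle.exists_cons_of_mem (hc : G.IsDicycle l) {x : ℕ} (hx : x ∈ l) :
    ∃ t, G.IsDicycle (x :: t) ∧ ∀ v, v ∈ x :: t ↔ v ∈ l := by
  obtain ⟨s, t, rfl⟩ := List.append_of_mem hx
  refine ⟨t ++ s, ?_, fun v => ?_⟩
  · simpa [List.rotate_append_length_eq] using hc.rotate s.length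
  · simp only [List.mem_cons, List.mem_append]
    tauto

lemma IsDicycle.exists_walk_of_mem (hc : G.IsDicycle l) {x : ℕ} (hx : x ∈ l) :
    ∃ (m : List ℕ) (hne : m ≠ []), (∀ v ∈ m, v ∈ l ∧ v ≠ x) ∧
      m.IsChain (fun u v => (u, v) ∈ G.arcs) ∧
      (x, m.head hne) ∈ G.arcs ∧ (m.getLast hne, x) ∈ G.arcs := by
  obtain ⟨t, hct, hmem⟩ := hc.exists_cons_of_mem hx
  obtain ⟨hnd, hchain⟩ := isDicycle_cons_iff.mp hct
  have hne : t ≠ [] := by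
    rintro rfl
    exact (G.wf (x, x) (by simpa using hchain)).2.2 rfl
  rw [List.cons_append, List.isChain_cons, List.isChain_append] at hchain
  obtain ⟨hhead, hchain, -, hlast⟩ := hchain
  refine ⟨t, hne, fun v hv => ⟨(hmem v).1 (.tail _ hv), ?_⟩, hchain, ?_, ?_⟩
  · rintro rfl
    exact (List.nodup_cons.mp hnd).1 hv
  · exact hhead _ (by simp [List.head?_append, List.head?_eq_some_head hne])
  · exact hlast _ (List.getLast?_eq_some_getLast hne) _ rfl

lemma IsDicycle.mem_verts (hc : G.IsDicycle l) {v : ℕ} (hv : v ∈ l) : v ∈ G.verts := by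
  obtain ⟨m, hne, -, -, harc, -⟩ := hc.exists_walk_of_mem hv
  exact (G.wf _ harc).1

lemma IsDicycle.exists_ne (hc : G.IsDicycle l) (a : ℕ) : ∃ v ∈ l, v ≠ a := by
  obtain ⟨x, hx⟩ := List.exists_mem_of_ne_nil l hc.1
  obtain ⟨m, hne, hm, -⟩ := hc.exists_walk_of_mem hx
  by_cases hxa : x = a
  · subst hxa
    exact ⟨m.head hne, (hm _ (List.head_mem hne)).1, (hm _ (List.head_mem hne)).2⟩
  · exact ⟨x, hx, hxa⟩

lemma IsDicycle.induce (hc : G.IsDicycle l) {S : Finset ℕ} (hS : ∀ v ∈ l, v ∈ S) :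
    (G.induce S).IsDicycle l := by
  refine ⟨hc.1, hc.2.1, fun ⟨u, v⟩ hp => ?_⟩
  have harc := hc.2.2 _ hp
  obtain ⟨hu, hv⟩ := List.of_mem_zip hp
  have hwf := G.wf _ harc
  exact Finset.mem_filter.mpr ⟨harc, Finset.mem_inter.mpr ⟨hwf.1, hS u hu⟩,
    Finset.mem_inter.mpr ⟨hwf.2.1, hS v (List.mem_rotate.mp hv)⟩, hwf.2.2⟩

end Dicycles

lemma exists_isDicolouring_dichi (G : FDigraph) : ∃ φ, G.IsDicolouring G.dichi φ := by
  refine Nat.sInf_mem (s := {k | ∃ φ, G.IsDicolouring k φ})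
    ⟨G.verts.sup id + 1, id, fun v hv => ?_, fun c ⟨l, hc, hcol⟩ => ?_⟩
  · exact Nat.lt_succ_of_le (Finset.le_sup (f := id) hv)
  · obtain ⟨v, hv, hvc⟩ := hc.exists_ne c
    exact hvc (hcol v hv)

lemma dichi_le_of_isDicolouring {G : FDigraph} {k : ℕ} {φ : ℕ → ℕ} (h : G.IsDicolouring k φ) :
    G.dichi ≤ k :=
  Nat.sInf_le ⟨φ, h⟩

lemma verts_induce_erase (G : FDigraph) (x : ℕ) :
    (G.induce (G.verts.erase x)).verts = G.verts.erase x :=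
  Finset.inter_eq_right.mpr (Finset.erase_subset x G.verts)

def HasMonoReturnWalk (G : FDigraph) (x : ℕ) (φ : ℕ → ℕ) (c : ℕ) : Prop :=
  ∃ (l : List ℕ) (hne : l ≠ []),
    (∀ v ∈ l, v ∈ G.verts.erase x) ∧
    l.IsChain (fun u v => (u, v) ∈ G.arcs) ∧
    (x, l.head hne) ∈ G.arcs ∧
    (l.getLast hne, x) ∈ G.arcs ∧
    ∀ v ∈ l, φ v = c

section Extension

variable {G : FDigraph} {x : ℕ} {φ : ℕ → ℕ}

lemma hasMonoReturnWalk_of_not_acyclicOn_update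
    (hφ : ∀ c, (G.induce (G.verts.erase x)).AcyclicOn {v | φ v = c}) {c c' : ℕ}
    (h : ¬ G.AcyclicOn {v | Function.update φ x c v = c'}) : G.HasMonoReturnWalk x φ c := by
  obtain ⟨l, hcyc, hcol⟩ := not_not.mp h
  have hcol' : ∀ v ∈ l, v ≠ x → φ v = c' := fun v hv hvx => by
    simpa [Function.update_of_ne hvx] using hcol v hv
  by_cases hxl : x ∈ l
  · have hc : c = c' := by simpa using hcol x hxl
    obtain ⟨m, hne, hm, hchain, hhead, hlast⟩ := hcyc.exists_walk_of_mem hxl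
    refine ⟨m, hne, fun v hv => ?_, hchain, hhead, hlast, fun v hv => ?_⟩
    · exact Finset.mem_erase.mpr ⟨(hm v hv).2, hcyc.mem_verts (hm v hv).1⟩
    · exact hc ▸ hcol' v (hm v hv).1 (hm v hv).2
  · have hne : ∀ v ∈ l, v ≠ x := fun v hv h => hxl (h ▸ hv)
    exact (hφ c' ⟨l, hcyc.induce fun v hv => Finset.mem_erase.mpr ⟨hne v hv, hcyc.mem_verts hv⟩,
      fun v hv => hcol' v hv (hne v hv)⟩).elim

lemma isDicolouring_update {k k' c : ℕ} (hφ : (G.induce (G.verts.erase x)).IsDicolouring k φ)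
    (hk : k ≤ k') (hc : c < k') (hwalk : ¬ G.HasMonoReturnWalk x φ c) :
    G.IsDicolouring k' (Function.update φ x c) := by
  refine ⟨fun v hv => ?_, fun c' h =>
    hwalk (hasMonoReturnWalk_of_not_acyclicOn_update hφ.2 (not_not_intro h))⟩
  rcases eq_or_ne v x with rfl | hvx
  · simpa using hc
  · rw [Function.update_of_ne hvx]
    exact (hφ.1 v (by rw [verts_induce_erase]; exact Finset.mem_erase.mpr ⟨hvx, hv⟩)).trans_le hk

lemma dichi_le_dichi_induce_erase_add_one (G : FDigraph) (x : ℕ) :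
    G.dichi ≤ (G.induce (G.verts.erase x)).dichi + 1 := by
  obtain ⟨φ, hφ⟩ := exists_isDicolouring_dichi (G.induce (G.verts.erase x))
  refine dichi_le_of_isDicolouring (isDicolouring_update hφ (Nat.le_succ _) (Nat.lt_succ_self _) ?_)
  rintro ⟨l, hne, hmem, -, -, -, hcol⟩
  have := hφ.1 _ (by rw [verts_induce_erase]; exact hmem _ (List.head_mem hne))
  rw [hcol _ (List.head_mem hne)] at this
  exact lt_irrefl _ this

lemma hasMonoReturnWalk_of_dichi_induce_erase_lt
    (hlt : (G.induce (G.verts.erase x)).dichi < G.dichi)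
    (hφ : (G.induce (G.verts.erase x)).IsDicolouring (G.induce (G.verts.erase x)).dichi φ)
    {c : ℕ} (hc : c < (G.induce (G.verts.erase x)).dichi) : G.HasMonoReturnWalk x φ c := by
  by_contra hwalk
  exact hlt.not_ge (dichi_le_of_isDicolouring (isDicolouring_update hφ le_rfl hc hwalk))

lemma le_outDeg_of_hasMonoReturnWalk {k : ℕ} (h : ∀ c < k, G.HasMonoReturnWalk x φ c) :
    k ≤ G.outDeg x :=
  calc k = (Finset.range k).card := (Finset.card_range k).symm
    _ ≤ ((G.arcs.filter fun a => a.1 = x).image (φ ∘ Prod.snd)).card :=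
      Finset.card_le_card fun c hc => by
        obtain ⟨l, hne, -, -, hhead, -, hcol⟩ := h c (Finset.mem_range.mp hc)
        exact Finset.mem_image.mpr
          ⟨(x, l.head hne), Finset.mem_filter.mpr ⟨hhead, rfl⟩, hcol _ (List.head_mem hne)⟩
    _ ≤ G.outDeg x := Finset.card_image_le

lemma le_inDeg_of_hasMonoReturnWalk {k : ℕ} (h : ∀ c < k, G.HasMonoReturnWalk x φ c) :
    k ≤ G.inDeg x :=
  calc k = (Finset.range k).card := (Finset.card_range k).symm
    _ ≤ ((G.arcs.filter fun a => a.2 = x).image (φ ∘ Prod.fst)).card :=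
      Finset.card_le_card fun c hc => by
        obtain ⟨l, hne, -, -, -, hlast, hcol⟩ := h c (Finset.mem_range.mp hc)
        exact Finset.mem_image.mpr
          ⟨(l.getLast hne, x), Finset.mem_filter.mpr ⟨hlast, rfl⟩, hcol _ (List.getLast_mem hne)⟩
    _ ≤ G.inDeg x := Finset.card_image_le

end Extension

end FDigraph

theorem low_vertex_walks_general (G : FDigraph) (x : ℕ)
    (hlt : (G.induce (G.verts.erase x)).dichi < G.dichi) :
    (∀ φ : ℕ → ℕ,
      (G.induce (G.verts.erase x)).IsDicolouring ((G.induce (G.verts.erase x)).dichi) φ →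
      ∀ c, (∃ v ∈ G.verts.erase x, φ v = c) →
        ∃ (l : List ℕ) (hne : l ≠ []),
          (∀ v ∈ l, v ∈ G.verts.erase x) ∧
          l.Chain' (fun u v => (u, v) ∈ G.arcs) ∧
          (x, l.head hne) ∈ G.arcs ∧
          (l.getLast hne, x) ∈ G.arcs ∧
          ∀ v ∈ l, φ v = c) ∧
    G.dichi - 1 ≤ min (G.outDeg x) (G.inDeg x) := by
  refine ⟨fun φ hφ c ⟨v, hv, hvc⟩ => ?_, ?_⟩
  · have hc : c < (G.induce (G.verts.erase x)).dichi :=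
      hvc ▸ hφ.1 v (by rwa [G.verts_induce_erase x])
    exact FDigraph.hasMonoReturnWalk_of_dichi_induce_erase_lt hlt hφ hc
  · obtain ⟨φ, hφ⟩ := (G.induce (G.verts.erase x)).exists_isDicolouring_dichi
    have hwalks := fun c (hc : c < _) =>
      FDigraph.hasMonoReturnWalk_of_dichi_induce_erase_lt hlt hφ hc
    have hle : G.dichi - 1 ≤ (G.induce (G.verts.erase x)).dichi :=
      Nat.sub_le_of_le_add (G.dichi_le_dichi_induce_erase_add_one x)
    exact le_min (hle.trans (FDigraph.le_outDeg_of_hasMonoReturnWalk hwalks))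
      (hle.trans (FDigraph.le_inDeg_of_hasMonoReturnWalk hwalks))

/-- if `χ⃗(G - x) < χ⃗(G)` then in every optimal dicolouring of
`G - x` each used colour carries a monochromatic directed walk from an
out-neighbour of `x` to an in-neighbour of `x`; in particular
`min(d⁺(x), d⁻(x)) ≥ χ⃗(G) - 1`. -/
theorem low_vertex_walks (G : FDigraph) (x : ℕ) (hx : x ∈ G.verts)
    (hlt : (G.induce (G.verts.erase x)).dichi < G.dichi) :
    (∀ φ : ℕ → ℕ,
      (G.induce (G.verts.erase x)).IsDicolouring ((G.induce (G.verts.erase x)).dichi) φ →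
      ∀ c, (∃ v ∈ G.verts.erase x, φ v = c) →
        ∃ (l : List ℕ) (hne : l ≠ []),
          (∀ v ∈ l, v ∈ G.verts.erase x) ∧
          l.Chain' (fun u v => (u, v) ∈ G.arcs) ∧
          (x, l.head hne) ∈ G.arcs ∧
          (l.getLast hne, x) ∈ G.arcs ∧
          ∀ v ∈ l, φ v = c) ∧
    G.dichi - 1 ≤ min (G.outDeg x) (G.inDeg x) :=
  low_vertex_walks_general G x hlt
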